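/- arXiv:1109.5965 — 3 statements merged into one kernel-verified Lean document; each statement's English description precedes it below -/
import Mathlib

section
/- Let h : ℝ × ℂ² → ℂ be such that for each s, h(s, ·) is a polynomial in (z₁, z₂), h(0, z₁, z₂) = 0 for all z, h is differentiable in s, and h(t+s, z₁, z₂) = h(s, z₁, z₂) + h(t, z₁ + s, e^{bs}z₂) for all s, t ∈ ℝ, z ∈ ℂ² (where b ∈ ℂ is fixed). Then there exists a polynomial q ∈ ℂ[z₁, z₂] with h(s, z₁, z₂) = q(z₁ + s, e^{bs}z₂) − q(z₁, z₂). -/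
/-!
Differentiating the cocycle identity in `t` at `t = 0` shows that `s ↦ h(s, z)` has derivative
`g(z₁ + s, e^{bs} z₂)`, where `g = ∂ₛh(0, ·)`. By Baire, the total degree of `h(s, ·)` is bounded
for `s` near some `s₀`, so `∂ₛh(s₀, ·)` lies in a finite-dimensional, hence closed, space of
polynomial functions; differentiating the cocycle identity at `(s₀, 0)` then shows that `g` is a
polynomial. The vector field `D = ∂₁ + b z₂ ∂₂` maps `ℂ[z₁, z₂]` onto itself, so `g = D q`, and
`h(s, z) - q(z₁ + s, e^{bs} z₂)` has zero derivative in `s`.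
-/

open MvPolynomial Filter Topology

namespace MvPolynomial

theorem hasDerivAt_eval_comp {𝕜 𝔸 σ : Type*} [NontriviallyNormedField 𝕜] [NormedCommRing 𝔸]
    [NormedAlgebra 𝕜 𝔸] [Fintype σ] (p : MvPolynomial σ 𝔸) {v : 𝕜 → σ → 𝔸}
    {v' : σ → 𝔸} {x : 𝕜} (hv : ∀ i, HasDerivAt (fun x => v x i) (v' i) x) :
    HasDerivAt (fun x => eval (v x) p) (∑ i, v' i * eval (v x) (pderiv i p)) x := by
  classical
  induction p using MvPolynomial.induction_on with
  | C a => simpa using hasDerivAt_const x a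
  | add p q hp hq =>
    simp only [map_add]
    exact (hp.add hq).congr_deriv (by simp [mul_add, Finset.sum_add_distrib])
  | mul_X p j hp =>
    simp only [map_mul, eval_X]
    refine (hp.mul (hv j)).congr_deriv ?_
    simp [pderiv_X, Pi.single_apply, apply_ite (eval (v x)), mul_add, Finset.sum_add_distrib,
      Finset.sum_mul, mul_right_comm _ _ (v x j), mul_comm (eval (v x) p), add_comm, mul_assoc]

end MvPolynomial

noncomputable def flowDeriv (b : ℂ) :
    Derivation ℂ (MvPolynomial (Fin 2) ℂ) (MvPolynomial (Fin 2) ℂ) :=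
  pderiv 0 + (C b * X 1 : MvPolynomial (Fin 2) ℂ) • pderiv 1

theorem flowDeriv_apply (b : ℂ) (p : MvPolynomial (Fin 2) ℂ) :
    flowDeriv b p = pderiv 0 p + C b * X 1 * pderiv 1 p := rfl

theorem hasDerivAt_eval_flow (b : ℂ) (q : MvPolynomial (Fin 2) ℂ) (z₁ z₂ : ℂ) (s : ℝ) :
    HasDerivAt (fun s : ℝ => eval ![z₁ + s, Complex.exp (b * s) * z₂] q)
      (eval ![z₁ + s, Complex.exp (b * s) * z₂] (flowDeriv b q)) s := by
  have hv : ∀ i, HasDerivAt (fun s : ℝ => (![z₁ + s, Complex.exp (b * s) * z₂] : Fin 2 → ℂ) i)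
      (![1, b * (Complex.exp (b * s) * z₂)] i) s := by
    intro i
    fin_cases i
    · simpa using (Complex.ofRealCLM.hasDerivAt (x := s)).const_add z₁
    · simpa [mul_comm, mul_left_comm, mul_assoc] using
        (((Complex.ofRealCLM.hasDerivAt (x := s)).const_mul b).cexp).mul_const z₂
  refine (hasDerivAt_eval_comp q hv).congr_deriv ?_
  simp [Fin.sum_univ_two, flowDeriv_apply]

theorem flowDeriv_X0_pow_succ (b : ℂ) (k : ℕ) :
    flowDeriv b (X 0 ^ (k + 1)) = ((k : ℂ) + 1) • X 0 ^ k := by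
  simp [flowDeriv_apply, pderiv_X, smul_eq_C_mul]

theorem flowDeriv_X1_pow (b : ℂ) (l : ℕ) :
    flowDeriv b (X 1 ^ l) = (b * l) • X 1 ^ l := by
  induction l with
  | zero => simp
  | succ l ih =>
    rw [pow_succ, Derivation.leibniz, ih, flowDeriv_apply]
    simp [pderiv_X, smul_eq_C_mul]
    ring

theorem flowDeriv_X0_pow_succ_mul_X1_pow (b : ℂ) (k l : ℕ) :
    flowDeriv b (X 0 ^ (k + 1) * X 1 ^ l) =
      ((k : ℂ) + 1) • (X 0 ^ k * X 1 ^ l) + (b * l) • (X 0 ^ (k + 1) * X 1 ^ l) := by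
  rw [Derivation.leibniz, flowDeriv_X0_pow_succ, flowDeriv_X1_pow, smul_eq_mul, smul_eq_mul]
  simp only [smul_eq_C_mul]
  ring

theorem X0_pow_mul_X1_pow_mem_range_flowDeriv (b : ℂ) (k l : ℕ) :
    X 0 ^ k * X 1 ^ l ∈ LinearMap.range (flowDeriv b).toLinearMap := by
  -- On `z₁ ^ k * z₂ ^ l`, `D` acts as `b * l` plus a lowering operator in `k`.
  by_cases hbl : b * l = 0
  · refine ⟨((k : ℂ) + 1)⁻¹ • (X 0 ^ (k + 1) * X 1 ^ l), ?_⟩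
    rw [map_smul, Derivation.coeFn_coe, flowDeriv_X0_pow_succ_mul_X1_pow, hbl, zero_smul,
      add_zero, smul_smul, inv_mul_cancel₀ (Nat.cast_add_one_ne_zero k), one_smul]
  induction k with
  | zero =>
    refine ⟨(b * l)⁻¹ • X 1 ^ l, ?_⟩
    rw [map_smul, Derivation.coeFn_coe, flowDeriv_X1_pow, smul_smul, inv_mul_cancel₀ hbl,
      one_smul, pow_zero, one_mul]
  | succ k ih =>
    have hmem := sub_mem (LinearMap.mem_range_self (flowDeriv b).toLinearMap
      (X 0 ^ (k + 1) * X 1 ^ l)) (Submodule.smul_mem _ ((k : ℂ) + 1) ih)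
    rw [Derivation.coeFn_coe, flowDeriv_X0_pow_succ_mul_X1_pow, add_sub_cancel_left] at hmem
    replace hmem := Submodule.smul_mem _ (b * l)⁻¹ hmem
    rwa [smul_smul, inv_mul_cancel₀ hbl, one_smul] at hmem

theorem flowDeriv_surjective (b : ℂ) : Function.Surjective (flowDeriv b) := by
  intro p
  suffices p ∈ LinearMap.range (flowDeriv b).toLinearMap by
    simpa using this
  induction p using MvPolynomial.induction_on' with
  | monomial u a =>
    have hu : monomial u a = a • (X 0 ^ u 0 * X 1 ^ u 1 : MvPolynomial (Fin 2) ℂ) := by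
      rw [monomial_eq, Finsupp.prod_fintype _ _ (fun _ => pow_zero _), Fin.prod_univ_two,
        smul_eq_C_mul]
    rw [hu]
    exact Submodule.smul_mem _ a (X0_pow_mul_X1_pow_mem_range_flowDeriv b _ _)
  | add p q hp hq => exact add_mem hp hq

theorem Submodule.mem_of_tendsto_slope {𝕜 E : Type*} [NontriviallyNormedField 𝕜]
    [AddCommGroup E] [Module 𝕜 E] [TopologicalSpace E] {W : Submodule 𝕜 E}
    (hW : IsClosed (W : Set E)) {f : 𝕜 → E} {x : 𝕜} {f' : E}
    (hf : Tendsto (slope f x) (𝓝[≠] x) (𝓝 f')) (hfW : ∀ᶠ t in 𝓝 x, f t ∈ W) : f' ∈ W :=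
  hW.mem_of_tendsto hf <| (eventually_nhdsWithin_of_eventually_nhds hfW).mono fun _ ht =>
    W.smul_mem _ (W.sub_mem ht hfW.self_of_nhds)

noncomputable def evalFn : MvPolynomial (Fin 2) ℂ →ₗ[ℂ] ℂ → ℂ → ℂ where
  toFun p z₁ z₂ := eval ![z₁, z₂] p
  map_add' p q := by ext; simp
  map_smul' a p := by ext; simp

theorem mem_range_evalFn_iff {f : ℂ → ℂ → ℂ} :
    f ∈ LinearMap.range evalFn ↔ ∃ q, ∀ z₁ z₂, f z₁ z₂ = eval ![z₁, z₂] q := by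
  simp only [LinearMap.mem_range, funext_iff, eq_comm (a := f _ _)]
  rfl

noncomputable def polyFnTotalDegreeLE (N : ℕ) : Submodule ℂ (ℂ → ℂ → ℂ) :=
  (restrictTotalDegree (Fin 2) ℂ N).map evalFn

theorem isClosed_polyFnTotalDegreeLE (N : ℕ) :
    IsClosed (polyFnTotalDegreeLE N : Set (ℂ → ℂ → ℂ)) :=
  have : FiniteDimensional ℂ (polyFnTotalDegreeLE N) := Module.Finite.map _ _
  Submodule.closed_of_finiteDimensional _

theorem exists_eventually_mem_polyFnTotalDegreeLE {X : Type*} [TopologicalSpace X]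
    [BaireSpace X] [Nonempty X] {F : X → ℂ → ℂ → ℂ} (hF : Continuous F)
    (hpoly : ∀ x, F x ∈ LinearMap.range evalFn) :
    ∃ N x₀, ∀ᶠ x in 𝓝 x₀, F x ∈ polyFnTotalDegreeLE N := by
  have hcover : ⋃ N, F ⁻¹' polyFnTotalDegreeLE N = Set.univ := by
    refine Set.eq_univ_of_forall fun x => ?_
    obtain ⟨p, hp⟩ := hpoly x
    exact Set.mem_iUnion.2 ⟨p.totalDegree, p, (mem_restrictTotalDegree _ _ _).2 le_rfl, hp⟩
  obtain ⟨N, x₀, hx₀⟩ := nonempty_interior_of_iUnion_of_closed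
    (fun N => (isClosed_polyFnTotalDegreeLE N).preimage hF) hcover
  exact ⟨N, x₀, mem_interior_iff_mem_nhds.1 hx₀⟩

section Cocycle

variable {b : ℂ} {h : ℝ → ℂ → ℂ → ℂ}

theorem deriv_eq_deriv_zero_of_cocycle
    (hcoc : ∀ (s t : ℝ) (z₁ z₂ : ℂ),
      h (t + s) z₁ z₂ = h s z₁ z₂ + h t (z₁ + s) (Complex.exp (b * s) * z₂))
    (s : ℝ) (z₁ z₂ : ℂ) :
    deriv (fun s => h s z₁ z₂) s =
      deriv (fun t => h t (z₁ + s) (Complex.exp (b * s) * z₂)) 0 := by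
  have hshift := deriv_comp_add_const (f := fun s => h s z₁ z₂) (a := s) (x := 0)
  rw [zero_add] at hshift
  simp_rw [← hshift, hcoc s, deriv_const_add]

theorem exists_eval_eq_deriv_zero_of_cocycle
    (hpoly : ∀ s : ℝ, ∃ q : MvPolynomial (Fin 2) ℂ, ∀ z₁ z₂ : ℂ,
      h s z₁ z₂ = MvPolynomial.eval ![z₁, z₂] q)
    (hdiff : ∀ z₁ z₂ : ℂ, Differentiable ℝ fun s => h s z₁ z₂)
    (hcoc : ∀ (s t : ℝ) (z₁ z₂ : ℂ),
      h (t + s) z₁ z₂ = h s z₁ z₂ + h t (z₁ + s) (Complex.exp (b * s) * z₂)) :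
    ∃ r : MvPolynomial (Fin 2) ℂ, ∀ z₁ z₂ : ℂ,
      deriv (fun s => h s z₁ z₂) 0 = eval ![z₁, z₂] r := by
  obtain ⟨N, s₀, hN⟩ := exists_eventually_mem_polyFnTotalDegreeLE
    (continuous_pi fun z₁ => continuous_pi fun z₂ => (hdiff z₁ z₂).continuous)
    (fun s => mem_range_evalFn_iff.2 (hpoly s))
  have hd : (fun z₁ z₂ => deriv (fun s => h s z₁ z₂) s₀) ∈ polyFnTotalDegreeLE N :=
    Submodule.mem_of_tendsto_slope (W := (polyFnTotalDegreeLE N).restrictScalars ℝ)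
      (isClosed_polyFnTotalDegreeLE N)
      (tendsto_pi_nhds.2 fun z₁ => tendsto_pi_nhds.2 fun z₂ =>
        hasDerivAt_iff_tendsto_slope.1 (hdiff z₁ z₂ s₀).hasDerivAt) hN
  obtain ⟨d, -, hd⟩ := hd
  obtain ⟨p, hp⟩ := hpoly s₀
  refine ⟨d - flowDeriv b p, fun z₁ z₂ => ?_⟩
  have hleft : HasDerivAt (fun t : ℝ => h (s₀ + t) z₁ z₂) (eval ![z₁, z₂] d) 0 := by
    have hds : eval ![z₁, z₂] d = deriv (fun s => h s z₁ z₂) s₀ := congrFun₂ hd z₁ z₂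
    rw [hds]
    exact HasDerivAt.comp_const_add (f := fun s => h s z₁ z₂) s₀ 0
      (by rw [add_zero]; exact (hdiff z₁ z₂ s₀).hasDerivAt)
  have hright : HasDerivAt (fun t : ℝ => h (s₀ + t) z₁ z₂)
      (deriv (fun s => h s z₁ z₂) 0 + eval ![z₁, z₂] (flowDeriv b p)) 0 := by
    simp_rw [hcoc _ s₀, hp]
    have hflow := hasDerivAt_eval_flow b p z₁ z₂ 0
    simp only [Complex.ofReal_zero, mul_zero, Complex.exp_zero, one_mul, add_zero] at hflow
    exact (hdiff z₁ z₂ 0).hasDerivAt.add hflow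
  rw [map_sub, hleft.unique hright]
  ring

end Cocycle

/-- Determination of the third component of a one-parameter subgroup commuting with
the canonical translation group, over the flow `(z₁,z₂) ↦ (z₁+s, e^{bs}z₂)`:
a polynomial cocycle `h` with `h(0,·) = 0` has the form
`h(s,z₁,z₂) = q(z₁+s, e^{bs}z₂) − q(z₁,z₂)` for a polynomial `q`. -/
theorem statement14 (b : ℂ) (h : ℝ → ℂ → ℂ → ℂ)
    (hpoly : ∀ s : ℝ, ∃ q : MvPolynomial (Fin 2) ℂ, ∀ z₁ z₂ : ℂ,
      h s z₁ z₂ = MvPolynomial.eval ![z₁, z₂] q)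
    (h0 : ∀ z₁ z₂ : ℂ, h 0 z₁ z₂ = 0)
    (hdiff : ∀ z₁ z₂ : ℂ, Differentiable ℝ fun s => h s z₁ z₂)
    (hcoc : ∀ (s t : ℝ) (z₁ z₂ : ℂ),
      h (t + s) z₁ z₂ = h s z₁ z₂ + h t (z₁ + s) (Complex.exp (b * s) * z₂)) :
    ∃ q : MvPolynomial (Fin 2) ℂ, ∀ (s : ℝ) (z₁ z₂ : ℂ),
      h s z₁ z₂ = MvPolynomial.eval ![z₁ + s, Complex.exp (b * s) * z₂] q -
        MvPolynomial.eval ![z₁, z₂] q := by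
  obtain ⟨r, hr⟩ := exists_eval_eq_deriv_zero_of_cocycle hpoly hdiff hcoc
  obtain ⟨q, rfl⟩ := flowDeriv_surjective b r
  refine ⟨q, fun s z₁ z₂ => ?_⟩
  have hderiv_zero : ∀ s : ℝ, HasDerivAt
      (fun s : ℝ => h s z₁ z₂ - eval ![z₁ + s, Complex.exp (b * s) * z₂] q) 0 s := fun s => by
    have := (hdiff z₁ z₂ s).hasDerivAt.sub (hasDerivAt_eval_flow b q z₁ z₂ s)
    rwa [deriv_eq_deriv_zero_of_cocycle hcoc, hr, sub_self] at this
  have hconst := is_const_of_deriv_eq_zero (fun s => (hderiv_zero s).differentiableAt)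
    (fun s => (hderiv_zero s).deriv) s 0
  simp only [h0, Complex.ofReal_zero, mul_zero, Complex.exp_zero, one_mul, add_zero,
    zero_sub] at hconst
  linear_combination hconst
end

section
/- Let S_s(z₁, z₂) = (z₁, e^{bs}z₂) with b ∈ ℂ*, and let R : ℝ → Aut(ℂ²) be a one-parameter group of polynomial automorphisms commuting with every S_s. Then for each t, R_t has the form R_t(z₁, z₂) = (p_t(z₁), q_t·z₂) where p_t(z₁) = a(t)·z₁ + c(t) is affine in z₁ (with a(t) ∈ ℂ*) and q_t ∈ ℂ*. -/
/-!
Put `u = e^{bs}`. Commuting with `S_s` says that, for fixed `z₁`, the polynomials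
`w ↦ R_t(z₁, w)₁ - R_t(z₁, 1)₁` and `w ↦ R_t(z₁, w)₂ - w R_t(z₁, 1)₂` vanish at every `u`; as `u`
takes infinitely many values, `R_t(z₁, z₂) = (F(z₁), G(z₁) z₂)` for polynomials `F`, `G`.
Injectivity of `R_t` makes `F` injective, hence affine, and `G` zero-free, hence a nonzero constant.
-/

open Polynomial

theorem Complex.infinite_range_exp_mul_ofReal {b : ℂ} (hb : b ≠ 0) :
    (Set.range fun s : ℝ => Complex.exp (b * s)).Infinite := by
  refine (isPreconnected_range (by fun_prop)).infinite_of_nontrivial ?_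
  by_contra hsub
  rw [Set.not_nontrivial_iff] at hsub
  have hconst : (fun s : ℝ => Complex.exp (b * s)) = fun _ => 1 := funext fun s => by
    simpa using hsub (Set.mem_range_self s) (Set.mem_range_self 0)
  have hderiv : HasDerivAt (fun s : ℝ => Complex.exp (b * s)) b 0 := by
    simpa using ((hasDerivAt_id (0 : ℝ)).ofReal_comp.const_mul b).cexp
  rw [hconst] at hderiv
  exact hb (hderiv.unique (hasDerivAt_const 0 1))

namespace Polynomial

theorem eq_of_eval_exp_mul_ofReal_eq {b : ℂ} (hb : b ≠ 0) {p q : ℂ[X]}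
    (h : ∀ s : ℝ, p.eval (Complex.exp (b * s)) = q.eval (Complex.exp (b * s))) : p = q := by
  rw [← sub_eq_zero]
  refine eq_zero_of_infinite_isRoot _ ((Complex.infinite_range_exp_mul_ofReal hb).mono ?_)
  rintro _ ⟨s, rfl⟩
  simp [h s]

/-- If `n ≥ 2`, injectivity forces `p - p(0) = c Xⁿ`, which takes the same value at `1` and at a
primitive `n`-th root of unity. -/
theorem natDegree_le_one_of_injective_eval {p : ℂ[X]}
    (hinj : Function.Injective fun z => p.eval z) : p.natDegree ≤ 1 := by
  by_contra! hn
  set q := p - C (p.eval 0)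
  have hqdeg : q.natDegree = p.natDegree := natDegree_sub_C
  have hroots : q.roots = Multiset.replicate p.natDegree 0 := by
    rw [Multiset.eq_replicate, ← hqdeg]
    refine ⟨splits_iff_card_roots.mp (IsAlgClosed.splits q), fun x hx => hinj ?_⟩
    simpa [q, sub_eq_zero] using isRoot_of_mem_roots hx
  have hq : q = C q.leadingCoeff * X ^ p.natDegree := by
    simpa [hroots] using (IsAlgClosed.splits q).eq_prod_roots
  have hζ := Complex.isPrimitiveRoot_exp p.natDegree (by omega)
  have hqζ : q.eval (Complex.exp (2 * Real.pi * Complex.I / p.natDegree)) = q.eval 1 := by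
    rw [hq]
    simp [hζ.pow_eq_one]
  exact hζ.ne_one (by omega) (hinj (by simpa [q] using hqζ))

theorem exists_eq_affine_of_injective_eval {p : ℂ[X]}
    (hinj : Function.Injective fun z => p.eval z) :
    ∃ a c : ℂ, a ≠ 0 ∧ ∀ z, p.eval z = a * z + c := by
  have hp := eq_X_add_C_of_natDegree_le_one (natDegree_le_one_of_injective_eval hinj)
  refine ⟨p.coeff 1, p.coeff 0, fun h1 => ?_, fun z => by rw [hp]; simp⟩
  rw [h1, C_0, zero_mul, zero_add] at hp
  exact zero_ne_one (hinj (by rw [hp]; simp))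

theorem eq_C_of_forall_eval_ne_zero {k : Type*} [Field k] [IsAlgClosed k] {p : k[X]}
    (h : ∀ z, p.eval z ≠ 0) : p = C (p.coeff 0) :=
  eq_C_of_degree_eq_zero <| by_contra fun hd => (IsAlgClosed.exists_root p hd).elim h

end Polynomial

namespace MvPolynomial

variable {R : Type*} [CommSemiring R]

theorem exists_polynomial_eval_eq_eval_update {σ : Type*} [DecidableEq σ]
    (P : MvPolynomial σ R) (x : σ → R) (i : σ) :
    ∃ p : R[X], ∀ w, p.eval w = eval (Function.update x i w) P := by
  refine ⟨eval₂ Polynomial.C (Function.update (fun j => Polynomial.C (x j)) i Polynomial.X) P,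
    fun w => ?_⟩
  have hC : (evalRingHom w).comp Polynomial.C = RingHom.id R := by ext; simp
  rw [polynomial_eval_eval₂, hC]
  congr
  ext j
  rw [Function.apply_update (fun _ => Polynomial.eval w)]
  simp

theorem exists_polynomial_eval_eq_eval_fst (P : MvPolynomial (Fin 2) R) (w : R) :
    ∃ p : R[X], ∀ z, p.eval z = eval ![z, w] P := by
  obtain ⟨p, hp⟩ := P.exists_polynomial_eval_eq_eval_update ![0, w] 0
  refine ⟨p, fun z => ?_⟩
  rw [hp]
  congr
  ext i
  fin_cases i <;> rfl

theorem exists_polynomial_eval_eq_eval_snd (P : MvPolynomial (Fin 2) R) (z : R) :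
    ∃ p : R[X], ∀ w, p.eval w = eval ![z, w] P := by
  obtain ⟨p, hp⟩ := P.exists_polynomial_eval_eq_eval_update ![z, 0] 1
  refine ⟨p, fun w => ?_⟩
  rw [hp]
  congr
  ext i
  fin_cases i <;> rfl

theorem eval_eq_of_eval_exp_mul_ofReal_eq (P : MvPolynomial (Fin 2) ℂ) {b : ℂ} (hb : b ≠ 0)
    (z : ℂ) {q : ℂ[X]}
    (h : ∀ s : ℝ, eval ![z, Complex.exp (b * s)] P = q.eval (Complex.exp (b * s))) (w : ℂ) :
    eval ![z, w] P = q.eval w := by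
  obtain ⟨p, hp⟩ := P.exists_polynomial_eval_eq_eval_snd z
  rw [← hp, eq_of_eval_exp_mul_ofReal_eq hb fun s => (hp _).trans (h s)]

end MvPolynomial

theorem exists_triangular_of_commute_scaling {b : ℂ} (hb : b ≠ 0) {f : ℂ × ℂ → ℂ × ℂ}
    (hpoly : ∃ P₁ P₂ : MvPolynomial (Fin 2) ℂ, ∀ z : ℂ × ℂ,
      f z = (MvPolynomial.eval ![z.1, z.2] P₁, MvPolynomial.eval ![z.1, z.2] P₂))
    (hcomm : ∀ (s : ℝ) (z : ℂ × ℂ),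
      f (z.1, Complex.exp (b * s) * z.2) = ((f z).1, Complex.exp (b * s) * (f z).2)) :
    ∃ F G : ℂ[X], ∀ z : ℂ × ℂ, f z = (F.eval z.1, G.eval z.1 * z.2) := by
  obtain ⟨P₁, P₂, hP⟩ := hpoly
  have hcomm₁ (z : ℂ) (s : ℝ) :
      MvPolynomial.eval ![z, Complex.exp (b * s)] P₁ = MvPolynomial.eval ![z, 1] P₁ ∧
        MvPolynomial.eval ![z, Complex.exp (b * s)] P₂ =
          Complex.exp (b * s) * MvPolynomial.eval ![z, 1] P₂ := by
    simpa [hP] using hcomm s (z, 1)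
  have hfst (z w : ℂ) : MvPolynomial.eval ![z, w] P₁ = MvPolynomial.eval ![z, 1] P₁ :=
    (P₁.eval_eq_of_eval_exp_mul_ofReal_eq hb z (q := C (MvPolynomial.eval ![z, 1] P₁))
      (fun s => by rw [(hcomm₁ z s).1, eval_C]) w).trans eval_C
  have hsnd (z w : ℂ) : MvPolynomial.eval ![z, w] P₂ = MvPolynomial.eval ![z, 1] P₂ * w :=
    (P₂.eval_eq_of_eval_exp_mul_ofReal_eq hb z (q := C (MvPolynomial.eval ![z, 1] P₂) * X)
      (fun s => by rw [(hcomm₁ z s).2, eval_mul, eval_C, eval_X, mul_comm]) w).trans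
      (by rw [eval_mul, eval_C, eval_X])
  obtain ⟨F, hF⟩ := P₁.exists_polynomial_eval_eq_eval_fst 1
  obtain ⟨G, hG⟩ := P₂.exists_polynomial_eval_eq_eval_fst 1
  exact ⟨F, G, fun z => by rw [hP, hF, hG, hfst, hsnd]⟩

theorem Polynomial.injective_eval_of_injective_triangular {F G : ℂ[X]} {f : ℂ × ℂ → ℂ × ℂ}
    (hf : ∀ z : ℂ × ℂ, f z = (F.eval z.1, G.eval z.1 * z.2)) (hinj : Function.Injective f) :
    Function.Injective fun z => F.eval z := fun x y hxy =>
  congrArg Prod.fst (@hinj (x, 0) (y, 0) (by simp [hf, hxy]))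

theorem Polynomial.eval_ne_zero_of_injective_triangular {F G : ℂ[X]} {f : ℂ × ℂ → ℂ × ℂ}
    (hf : ∀ z : ℂ × ℂ, f z = (F.eval z.1, G.eval z.1 * z.2)) (hinj : Function.Injective f)
    (z : ℂ) : G.eval z ≠ 0 := fun h0 =>
  one_ne_zero (congrArg Prod.snd (@hinj (z, 1) (z, 0) (by simp [hf, h0])))

theorem statement16_general (b : ℂ) (hb : b ≠ 0) (R : ℝ → ℂ × ℂ → ℂ × ℂ)
    (hbij : ∀ t : ℝ, Function.Bijective (R t))
    (hpoly : ∀ t : ℝ, ∃ P₁ P₂ : MvPolynomial (Fin 2) ℂ, ∀ z : ℂ × ℂ,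
      R t z = (MvPolynomial.eval ![z.1, z.2] P₁, MvPolynomial.eval ![z.1, z.2] P₂))
    (hcomm : ∀ (s t : ℝ) (z : ℂ × ℂ),
      R t (z.1, Complex.exp (b * s) * z.2) =
        ((R t z).1, Complex.exp (b * s) * (R t z).2)) :
    ∀ t : ℝ, ∃ a c q : ℂ, a ≠ 0 ∧ q ≠ 0 ∧
      ∀ z : ℂ × ℂ, R t z = (a * z.1 + c, q * z.2) := by
  intro t
  obtain ⟨F, G, hFG⟩ := exists_triangular_of_commute_scaling hb (hpoly t) (fun s => hcomm s t)
  obtain ⟨a, c, ha, hF⟩ := exists_eq_affine_of_injective_eval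
    (injective_eval_of_injective_triangular hFG (hbij t).injective)
  have hG0 := eval_ne_zero_of_injective_triangular hFG (hbij t).injective
  have hG := eq_C_of_forall_eval_ne_zero hG0
  refine ⟨a, c, G.coeff 0, ha, by rw [coeff_zero_eq_eval_zero]; exact hG0 0, fun z => ?_⟩
  rw [hFG, hF, hG]
  simp

/-- A one-parameter group `R_t` of polynomial automorphisms of `ℂ²` commuting with
every `S_s(z₁,z₂) = (z₁, e^{bs}z₂)` (`b ≠ 0`) has the form
`R_t(z₁,z₂) = (a(t)z₁ + c(t), q(t)z₂)` with `a(t), q(t) ∈ ℂ*`. -/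
theorem statement16 (b : ℂ) (hb : b ≠ 0) (R : ℝ → ℂ × ℂ → ℂ × ℂ)
    (hgrp : ∀ (s t : ℝ) (z : ℂ × ℂ), R (t + s) z = R t (R s z))
    (hid : ∀ z : ℂ × ℂ, R 0 z = z)
    (hbij : ∀ t : ℝ, Function.Bijective (R t))
    (hpoly : ∀ t : ℝ, ∃ P₁ P₂ : MvPolynomial (Fin 2) ℂ, ∀ z : ℂ × ℂ,
      R t z = (MvPolynomial.eval ![z.1, z.2] P₁, MvPolynomial.eval ![z.1, z.2] P₂))
    (hcomm : ∀ (s t : ℝ) (z : ℂ × ℂ),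
      R t (z.1, Complex.exp (b * s) * z.2) =
        ((R t z).1, Complex.exp (b * s) * (R t z).2)) :
    ∀ t : ℝ, ∃ a c q : ℂ, a ≠ 0 ∧ q ≠ 0 ∧
      ∀ z : ℂ × ℂ, R t z = (a * z.1 + c, q * z.2) :=
  statement16_general b hb R hbij hpoly hcomm
end

section
/- Let S_s(z₁,z₂) = (z₁ + s, e^{bs}z₂) with b ∈ ℂ*, and let R_t be a one-parameter group of polynomial automorphisms of ℂ² commuting with all S_s. Then R_t(z₁, z₂) = (z₁ + c·t, e^{λt}·z₂) for some constants c, λ ∈ ℂ. -/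
open MvPolynomial

/-!
Expand a polynomial component of `R_t` as `∑ q_k(z₁) z₂^k`. Commuting with `S_s` forces
`q_k(z₁ + s) = e^{(j - k) b s} q_k(z₁)` for real `s`, with `j = 1` for the second component and
`j = 0` for the first one minus `z₁`. Differentiating in `s` gives `q_k' = (j - k) b q_k`, and a
polynomial can only satisfy this if `q_k = 0` (for `k ≠ j`, since `b ≠ 0`) or `q_k` is constant.
Hence `R_t z = (z₁ + c(t), m(t) z₂)`; the group law makes `c` additive and `m` multiplicative,
so continuity makes `c` linear and the ODE `m' = m'(0) m` makes `m` an exponential.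
-/

open Polynomial Complex
open scoped Polynomial.Bivariate

theorem MvPolynomial.eval_equivMvPolynomial {R : Type*} [CommSemiring R] (x y : R) (p : R[X][Y]) :
    eval ![x, y] (Bivariate.equivMvPolynomial R p) = p.evalEval x y := by
  change ((eval ![x, y]).comp (Bivariate.equivMvPolynomial R).toRingHom) p = evalEvalRingHom x y p
  congr 1
  ext <;> simp

namespace Polynomial

theorem eq_zero_of_derivative_eq_C_mul {K : Type*} [Field K] {p : K[X]} {β : K} (hβ : β ≠ 0)
    (h : derivative p = C β * p) : p = 0 := by
  by_contra hp
  have := degree_derivative_lt hp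
  rw [h, degree_C_mul hβ] at this
  exact lt_irrefl _ this

theorem derivative_eq_C_mul_of_eval_add_ofReal {p : ℂ[X]} {β : ℂ}
    (h : ∀ (x : ℂ) (s : ℝ), p.eval (x + s) = exp (β * s) * p.eval x) :
    derivative p = C β * p := by
  refine Polynomial.funext fun x => ?_
  have hshift : HasDerivAt (fun s : ℝ => p.eval (x + s)) ((derivative p).eval x) 0 := by
    simpa using ((p.hasDerivAt (x + (0 : ℝ))).comp_const_add x (0 : ℂ)).comp_ofReal
  have hexp : HasDerivAt (fun s : ℝ => exp (β * s) * p.eval x) (β * p.eval x) 0 := by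
    simpa using (((hasDerivAt_id (0 : ℂ)).const_mul β).cexp.comp_ofReal).mul_const (p.eval x)
  rw [eval_mul, eval_C]
  exact hshift.unique (by simpa only [h] using hexp)

theorem eval_coeff_mul_pow_of_evalEval_mul_eq {p : ℂ[X][Y]} {x x' a c : ℂ}
    (h : ∀ y, p.evalEval x' (a * y) = c * p.evalEval x y) (k : ℕ) :
    (p.coeff k).eval x' * a ^ k = c * (p.coeff k).eval x := by
  have hpoly : (p.map (evalRingHom x')).comp (C a * X) = C c * p.map (evalRingHom x) :=
    Polynomial.funext fun y => by simpa [map_evalRingHom_eval] using h y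
  simpa using congrArg (coeff · k) hpoly

theorem exists_eq_CC_mul_X_pow_of_evalEval_add_exp_mul {b : ℂ} (hb : b ≠ 0) (j : ℕ)
    {p : ℂ[X][Y]}
    (h : ∀ (s : ℝ) (x y : ℂ),
      p.evalEval (x + s) (exp (b * s) * y) = exp (b * s) ^ j * p.evalEval x y) :
    ∃ c : ℂ, p = CC c * X ^ j := by
  have hderiv (k : ℕ) : derivative (p.coeff k) = C ((j - k) * b) * p.coeff k := by
    refine derivative_eq_C_mul_of_eval_add_ofReal fun x s => ?_
    have hk := eval_coeff_mul_pow_of_evalEval_mul_eq (h s x) k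
    rw [← exp_nat_mul, ← exp_nat_mul] at hk
    have hexp : exp ((j - k) * b * s) = exp (j * (b * s)) / exp (k * (b * s)) := by
      rw [← exp_sub]; ring_nf
    rw [hexp, div_mul_eq_mul_div, eq_div_iff (exp_ne_zero _), ← hk]
  have hcoeff_eq (k : ℕ) : p.coeff k = if k = j then C ((p.coeff j).coeff 0) else 0 := by
    split_ifs with hkj
    · subst hkj
      exact eq_C_of_derivative_eq_zero (by simpa using hderiv k)
    · refine eq_zero_of_derivative_eq_C_mul ?_ (hderiv k)
      exact mul_ne_zero (sub_ne_zero.mpr (by exact_mod_cast Ne.symm hkj)) hb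
  exact ⟨(p.coeff j).coeff 0, Polynomial.ext fun k => by rw [hcoeff_eq, coeff_C_mul_X_pow]⟩

end Polynomial

theorem eq_add_mul_of_commute {b : ℂ} (hb : b ≠ 0) {F : ℂ × ℂ → ℂ × ℂ}
    (hpoly : ∃ P₁ P₂ : MvPolynomial (Fin 2) ℂ, ∀ z : ℂ × ℂ,
      F z = (MvPolynomial.eval ![z.1, z.2] P₁, MvPolynomial.eval ![z.1, z.2] P₂))
    (hcomm : ∀ (s : ℝ) (z : ℂ × ℂ),
      F (z.1 + s, exp (b * s) * z.2) = ((F z).1 + s, exp (b * s) * (F z).2)) (z : ℂ × ℂ) :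
    F z = (z.1 + (F 0).1, (F (0, 1)).2 * z.2) := by
  obtain ⟨P₁, P₂, hF⟩ := hpoly
  set p₁ := (Bivariate.equivMvPolynomial ℂ).symm P₁ - Polynomial.C Polynomial.X
  set p₂ := (Bivariate.equivMvPolynomial ℂ).symm P₂
  have hFp (x y : ℂ) : F (x, y) = (x + p₁.evalEval x y, p₂.evalEval x y) := by
    simp [hF, p₁, p₂, ← eval_equivMvPolynomial]
  have hcommxy (s : ℝ) (x y : ℂ) := hcomm s (x, y)
  simp only [hFp, Prod.mk.injEq] at hcommxy
  obtain ⟨c₁, hc₁⟩ :=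
    exists_eq_CC_mul_X_pow_of_evalEval_add_exp_mul hb 0 (p := p₁) fun s x y => by
      linear_combination (hcommxy s x y).1
  obtain ⟨c₂, hc₂⟩ :=
    exists_eq_CC_mul_X_pow_of_evalEval_add_exp_mul hb 1 (p := p₂) fun s x y => by
      linear_combination (hcommxy s x y).2
  obtain ⟨x, y⟩ := z
  rw [Prod.zero_eq_mk, hFp, hFp, hFp, hc₁, hc₂]
  simp only [evalEval_mul, evalEval_CC, evalEval_X, pow_zero, pow_one, mul_one, zero_add]

theorem eq_exp_mul_of_hasDerivAt_mul {f : ℝ → ℂ} {c : ℂ}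
    (hf : ∀ t, HasDerivAt f (c * f t) t) (t : ℝ) : f t = exp (c * t) * f 0 := by
  have hg (u : ℝ) : HasDerivAt (fun u : ℝ => exp (-(c * u)) * f u) 0 u := by
    have hexp : HasDerivAt (fun u : ℝ => exp (-(c * u))) (-c * exp (-(c * u))) u := by
      simpa [mul_comm] using (((hasDerivAt_id (u : ℂ)).const_mul c).neg.cexp).comp_ofReal
    exact (hexp.mul (hf u)).congr_deriv (by ring)
  have hconst :=
    is_const_of_deriv_eq_zero (fun u => (hg u).differentiableAt) (fun u => (hg u).deriv) t 0
  simp only [Complex.ofReal_zero, mul_zero, neg_zero, exp_zero, one_mul] at hconst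
  rw [← hconst, ← mul_assoc, ← exp_add, add_neg_cancel, exp_zero, one_mul]

theorem eq_exp_mul_of_add_eq_mul {f : ℝ → ℂ} (hf : Differentiable ℝ f)
    (hmul : ∀ t s, f (t + s) = f t * f s) (h0 : f 0 = 1) (t : ℝ) :
    f t = exp (deriv f 0 * t) := by
  have hderiv (t : ℝ) : HasDerivAt f (deriv f 0 * f t) t := by
    have : deriv f t = f t * deriv f 0 :=
      calc deriv f t = deriv (fun s => f (t + s)) 0 := by rw [deriv_comp_const_add, add_zero]
        _ = deriv (fun s => f t * f s) 0 := by simp_rw [hmul]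
        _ = f t * deriv f 0 := deriv_const_mul _ (hf 0)
    rw [mul_comm, ← this]
    exact (hf t).hasDerivAt
  rw [eq_exp_mul_of_hasDerivAt_mul hderiv t, h0, mul_one]

theorem statement17_general (b : ℂ) (hb : b ≠ 0) (R : ℝ → ℂ × ℂ → ℂ × ℂ)
    (hgrp : ∀ (s t : ℝ) (z : ℂ × ℂ), R (t + s) z = R t (R s z))
    (hid : ∀ z : ℂ × ℂ, R 0 z = z)
    (hpoly : ∀ t : ℝ, ∃ P₁ P₂ : MvPolynomial (Fin 2) ℂ, ∀ z : ℂ × ℂ,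
      R t z = (MvPolynomial.eval ![z.1, z.2] P₁, MvPolynomial.eval ![z.1, z.2] P₂))
    (hdiff : ∀ z : ℂ × ℂ, Differentiable ℝ fun t => R t z)
    (hcomm : ∀ (s t : ℝ) (z : ℂ × ℂ),
      R t (z.1 + (s : ℂ), Complex.exp (b * s) * z.2) =
        ((R t z).1 + (s : ℂ), Complex.exp (b * s) * (R t z).2)) :
    ∃ c lam : ℂ, ∀ (t : ℝ) (z : ℂ × ℂ),
      R t z = (z.1 + c * t, Complex.exp (lam * t) * z.2) := by
  set c : ℝ → ℂ := fun t => (R t 0).1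
  set m : ℝ → ℂ := fun t => (R t (0, 1)).2
  have hform (t : ℝ) (z : ℂ × ℂ) : R t z = (z.1 + c t, m t * z.2) :=
    eq_add_mul_of_commute hb (hpoly t) (fun s z => hcomm s t z) z
  have hadd (t s : ℝ) : c (t + s) = c t + c s := by
    simpa [hform, add_comm] using congrArg Prod.fst (hgrp s t 0)
  have hmul (t s : ℝ) : m (t + s) = m t * m s := by
    simpa [hform] using congrArg Prod.snd (hgrp s t (0, 1))
  have hm0 : m 0 = 1 := by simp [m, hid]
  have hc (t : ℝ) : c t = c 1 * t := by
    simpa [mul_comm] using map_real_smul (AddMonoidHom.mk' c hadd) (hdiff 0).continuous.fst t 1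
  refine ⟨c 1, deriv m 0, fun t z => ?_⟩
  rw [hform, hc, eq_exp_mul_of_add_eq_mul (f := m) (hdiff (0, 1)).snd hmul hm0]

/-- A one-parameter group `R_t` of polynomial automorphisms of `ℂ²` commuting with
every `S_s(z₁,z₂) = (z₁ + s, e^{bs}z₂)` (`b ≠ 0`) has the form
`R_t(z₁,z₂) = (z₁ + c t, e^{λt} z₂)` for some constants `c, λ ∈ ℂ`. -/
theorem statement17 (b : ℂ) (hb : b ≠ 0) (R : ℝ → ℂ × ℂ → ℂ × ℂ)
    (hgrp : ∀ (s t : ℝ) (z : ℂ × ℂ), R (t + s) z = R t (R s z))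
    (hid : ∀ z : ℂ × ℂ, R 0 z = z)
    (hbij : ∀ t : ℝ, Function.Bijective (R t))
    (hpoly : ∀ t : ℝ, ∃ P₁ P₂ : MvPolynomial (Fin 2) ℂ, ∀ z : ℂ × ℂ,
      R t z = (MvPolynomial.eval ![z.1, z.2] P₁, MvPolynomial.eval ![z.1, z.2] P₂))
    (hdiff : ∀ z : ℂ × ℂ, Differentiable ℝ fun t => R t z)
    (hcomm : ∀ (s t : ℝ) (z : ℂ × ℂ),
      R t (z.1 + (s : ℂ), Complex.exp (b * s) * z.2) =
        ((R t z).1 + (s : ℂ), Complex.exp (b * s) * (R t z).2)) :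
    ∃ c lam : ℂ, ∀ (t : ℝ) (z : ℂ × ℂ),
      R t z = (z.1 + c * t, Complex.exp (lam * t) * z.2) :=
  statement17_general b hb R hgrp hid hpoly hdiff hcomm
end
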